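/- Let H be a group, μ a symmetric probability measure on H with finite support, A a subset of H, and l₀ a positive integer. Then μ^(2l₀)(A·A) ≥ max over h ∈ H of (μ^(l₀)(hA))², provided A and μ are symmetric. -/

import Mathlib

open Finset
open scoped Pointwise Classical

/-- The mass that a finitely supported measure (an element of the monoid algebra,
whose multiplication is convolution) assigns to a set. -/
noncomputable def massOn {H : Type*} [Group H] (μ : MonoidAlgebra ℝ H) (A : Set H) : ℝ :=
  ∑ x ∈ μ.coeff.support, if x ∈ A then μ.coeff x else 0

/-!
Put `ν = μ^(l₀)`, so that `μ^(2l₀) = ν * ν`, and `ν` is again nonnegative and symmetric.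
For nonnegative `ν` the convolution square gives `S * T` at least the mass `ν(S) ν(T)`.
Taking `S = (hA)⁻¹` and `T = hA`, symmetry of `ν` gives `ν(S) = ν(hA)`, while
`(hA)⁻¹ (hA) = A⁻¹ A = A A`.
-/

lemma Finsupp.sum_comp_inv {G R N : Type*} [Group G] [Zero R] [AddCommMonoid N] {f : G →₀ R}
    (hf : ∀ x, f x⁻¹ = f x) (φ : G → R → N) :
    (f.sum fun x r => φ x⁻¹ r) = f.sum φ := by
  refine Finset.sum_nbij' (·⁻¹) (·⁻¹) ?_ ?_ ?_ ?_ ?_ <;> simp [hf]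

namespace MonoidAlgebra

section OrderedSemiring

variable {R M : Type*} [Semiring R] [PartialOrder R] [IsOrderedRing R] [Monoid M]

lemma coeff_mul_nonneg {f g : MonoidAlgebra R M} (hf : ∀ x, 0 ≤ f.coeff x)
    (hg : ∀ x, 0 ≤ g.coeff x) (x : M) : 0 ≤ (f * g).coeff x := by
  rw [coeff_mul]
  refine Finsupp.sum_nonneg' fun a => Finsupp.sum_nonneg' fun b => ?_
  split_ifs
  exacts [mul_nonneg (hf a) (hg b), le_rfl]

lemma coeff_pow_nonneg {f : MonoidAlgebra R M} (hf : ∀ x, 0 ≤ f.coeff x) (n : ℕ) (x : M) :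
    0 ≤ (f ^ n).coeff x := by
  induction n generalizing x with
  | zero => rw [pow_zero, one_def, coeff_single, Finsupp.single_apply]; split_ifs <;> simp
  | succ n ih => rw [pow_succ]; exact coeff_mul_nonneg ih hf x

end OrderedSemiring

section Symmetric

variable {R G : Type*} [CommSemiring R] [Group G]

lemma coeff_mul_inv {f g : MonoidAlgebra R G} (hf : ∀ x, f.coeff x⁻¹ = f.coeff x)
    (hg : ∀ x, g.coeff x⁻¹ = g.coeff x) (x : G) : (f * g).coeff x⁻¹ = (g * f).coeff x := by
  rw [coeff_mul_apply_left, coeff_mul_apply_right, ← Finsupp.sum_comp_inv hf]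
  refine Finsupp.sum_congr fun a _ => ?_
  rw [mul_comm, ← hg, mul_inv_rev, inv_inv, inv_inv]

lemma coeff_pow_inv {f : MonoidAlgebra R G} (hf : ∀ x, f.coeff x⁻¹ = f.coeff x) (n : ℕ) (x : G) :
    (f ^ n).coeff x⁻¹ = (f ^ n).coeff x := by
  induction n generalizing x with
  | zero => simp [one_def, Finsupp.single_apply, eq_comm (a := (1 : G)), inv_eq_one]
  | succ n ih => rw [pow_succ, coeff_mul_inv ih hf, ← pow_succ, pow_succ']

end Symmetric

end MonoidAlgebra

section MassOn

variable {H : Type*} [Group H]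

open MonoidAlgebra

lemma massOn_eq_sum (μ : MonoidAlgebra ℝ H) (C : Set H) :
    massOn μ C = μ.coeff.sum fun x r => if x ∈ C then r else 0 := rfl

lemma massOn_mul (f g : MonoidAlgebra ℝ H) (C : Set H) :
    massOn (f * g) C =
      f.coeff.sum fun a r => g.coeff.sum fun b s => if a * b ∈ C then r * s else 0 := by
  have hadd (x : H) (r s : ℝ) :
      (if x ∈ C then r + s else 0) = (if x ∈ C then r else 0) + (if x ∈ C then s else 0) :=
    ite_add_zero
  rw [massOn_eq_sum, MonoidAlgebra.mul_def, coeff_finsuppSum,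
    Finsupp.sum_sum_index (by simp) hadd]
  refine Finsupp.sum_congr fun a _ => ?_
  rw [coeff_finsuppSum, Finsupp.sum_sum_index (by simp) hadd]
  refine Finsupp.sum_congr fun b _ => ?_
  rw [coeff_single]
  exact Finsupp.sum_single_index (ite_self 0)

lemma massOn_mul_massOn_le {f g : MonoidAlgebra ℝ H} (hf : ∀ x, 0 ≤ f.coeff x)
    (hg : ∀ x, 0 ≤ g.coeff x) (S T : Set H) :
    massOn f S * massOn g T ≤ massOn (f * g) (S * T) := by
  rw [massOn_eq_sum, massOn_eq_sum, massOn_mul, Finsupp.sum_mul]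
  refine Finsupp.sum_le_sum fun a _ => ?_
  rw [Finsupp.mul_sum]
  refine Finsupp.sum_le_sum fun b _ => ?_
  by_cases hab : a ∈ S ∧ b ∈ T
  · simp [hab.1, hab.2, Set.mul_mem_mul hab.1 hab.2]
  · have hzero : (if a ∈ S then f.coeff a else 0) * (if b ∈ T then g.coeff b else 0) = 0 := by
      rcases not_and_or.mp hab with ha | hb <;> simp [*]
    rw [hzero]
    split_ifs
    exacts [mul_nonneg (hf a) (hg b), le_rfl]

lemma massOn_inv {f : MonoidAlgebra ℝ H} (hf : ∀ x, f.coeff x⁻¹ = f.coeff x) (S : Set H) :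
    massOn f S⁻¹ = massOn f S :=
  Finsupp.sum_comp_inv hf fun x r => if x ∈ S then r else 0

end MassOn

theorem stmt1_general {H : Type*} [Group H] (μ : MonoidAlgebra ℝ H)
    (hpos : ∀ g : H, 0 ≤ μ.coeff g)
    (hsymm : ∀ g : H, μ.coeff g⁻¹ = μ.coeff g)
    (A : Set H) (hA : A⁻¹ = A)
    (l₀ : ℕ) :
    ∀ h : H, (massOn (μ ^ l₀) (h • A)) ^ 2 ≤ massOn (μ ^ (2 * l₀)) (A * A) := by
  intro h
  have hprod : (h • A)⁻¹ * (h • A) = A * A := by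
    rw [Set.inv_smul_set_distrib, Set.op_smul_set_mul_eq_mul_smul_set, inv_smul_smul, hA]
  calc massOn (μ ^ l₀) (h • A) ^ 2
      = massOn (μ ^ l₀) (h • A)⁻¹ * massOn (μ ^ l₀) (h • A) := by
        rw [massOn_inv (MonoidAlgebra.coeff_pow_inv hsymm l₀), sq]
    _ ≤ massOn (μ ^ l₀ * μ ^ l₀) ((h • A)⁻¹ * (h • A)) :=
        massOn_mul_massOn_le (MonoidAlgebra.coeff_pow_nonneg hpos l₀)
          (MonoidAlgebra.coeff_pow_nonneg hpos l₀) _ _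
    _ = massOn (μ ^ (2 * l₀)) (A * A) := by rw [← pow_add, ← two_mul, hprod]

/-- For a symmetric probability measure `μ` with finite support on a group `H`
and a symmetric subset `A ⊆ H`, for any positive integer `l₀` one has
`μ^(2l₀)(A·A) ≥ sup_{h ∈ H} (μ^(l₀)(hA))²`, i.e. the left-hand side dominates the square of the
mass of every translate. -/
theorem stmt1 {H : Type*} [Group H] (μ : MonoidAlgebra ℝ H)
    (hpos : ∀ g : H, 0 ≤ μ.coeff g)
    (hprob : ∑ x ∈ μ.coeff.support, μ.coeff x = 1)
    (hsymm : ∀ g : H, μ.coeff g⁻¹ = μ.coeff g)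
    (A : Set H) (hA : A⁻¹ = A)
    (l₀ : ℕ) (hl₀ : 0 < l₀) :
    ∀ h : H, (massOn (μ ^ l₀) (h • A)) ^ 2 ≤ massOn (μ ^ (2 * l₀)) (A * A) :=
  stmt1_general μ hpos hsymm A hA l₀
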